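/- arXiv:1705.03342 — 2 statements merged into one kernel-verified Lean document; each statement's English description precedes it below -/
import Mathlib

section
/- The system of two equations (3/2)π²a² − π²a + a²c + (3/2)π² − c = 0 and 3π²a − π² + 2ac = 0 in real unknowns a and c has exactly two solutions: (a, c) = (3 − 2√2, √2π²) and (a, c) = (3 + 2√2, −√2π²). -/
open Real

theorem stmt_0 (a c : ℝ) :
    ((3/2) * π^2 * a^2 - π^2 * a + a^2 * c + (3/2) * π^2 - c = 0 ∧
      3 * π^2 * a - π^2 + 2 * a * c = 0) ↔
    ((a = 3 - 2 * Real.sqrt 2 ∧ c = Real.sqrt 2 * π^2) ∨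
      (a = 3 + 2 * Real.sqrt 2 ∧ c = -(Real.sqrt 2) * π^2)) := by
  have hs : Real.sqrt 2 ^ 2 = 2 := Real.sq_sqrt (by norm_num)
  have hs0 : (0:ℝ) ≤ Real.sqrt 2 := Real.sqrt_nonneg 2
  set s := Real.sqrt 2 with hsdef
  have hπ : (π:ℝ)^2 ≠ 0 := pow_ne_zero 2 Real.pi_ne_zero
  constructor
  · rintro ⟨h1, h2⟩
    have key : π^2 * (a^2 - 6*a + 1) = 0 := by
      linear_combination (a^2 - 1) * h2 - 2*a*h1
    have ha : a^2 - 6*a + 1 = 0 := by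
      rcases mul_eq_zero.1 key with h | h
      · exact absurd h hπ
      · exact h
    have hfac : (a - (3 - 2*s)) * (a - (3 + 2*s)) = 0 := by
      linear_combination ha - 4*hs
    have hslt : s < 3/2 := by nlinarith
    rcases mul_eq_zero.1 hfac with h | h
    · have haa : a = 3 - 2*s := by linarith [sub_eq_zero.1 h]
      left
      refine ⟨haa, ?_⟩
      subst haa
      have hd : (6 - 4*s) ≠ 0 := by nlinarith
      have : (6 - 4*s) * (c - s*π^2) = 0 := by
        linear_combination h2 + 4*π^2*hs
      rcases mul_eq_zero.1 this with h' | h'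
      · exact absurd h' hd
      · linarith [sub_eq_zero.1 h']
    · have haa : a = 3 + 2*s := by linarith [sub_eq_zero.1 h]
      right
      refine ⟨haa, ?_⟩
      subst haa
      have hd : (6 + 4*s) ≠ 0 := by positivity
      have : (6 + 4*s) * (c + s*π^2) = 0 := by
        linear_combination h2 + 4*π^2*hs
      rcases mul_eq_zero.1 this with h' | h'
      · exact absurd h' hd
      · linarith [sub_eq_zero.1 (by linarith : c - (-(s*π^2)) = 0)]
  · rintro (⟨ha, hc⟩ | ⟨ha, hc⟩) <;> subst ha <;> subst hc <;> constructor
    · linear_combination (4*s - 6)*π^2*hs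
    · linear_combination (-4)*π^2*hs
    · linear_combination (-4*s - 6)*π^2*hs
    · linear_combination (-4)*π^2*hs
end

section
/- For the two-disk configuration (radius 1/2, distance 1), define φ(τ) near 0 by the functional equation φ(τ) = Δ(χ(τ), τ) + φ(χ(τ)) − 1, where Δ(σ,τ) = ‖Γ₁(σ) − Γ₂(τ)‖ with Γ₁(σ) = (1/2)(sin 2πσ, cos 2πσ), Γ₂(τ) = (0,2) + (1/2)(sin 2πτ, −cos 2πτ), and χ is C⁴ near 0 with χ(0) = 0, χ′(0) = 3 − 2√2 and φ′(χ(τ)) = −∂Δ/∂σ(χ(τ), τ). If φ is C⁴ near 0 with φ(0) = 1 and φ′(0) = 0, then φ″(0) = 2√2π², i.e., the second Taylor coefficient of φ at 0 is c₂ = √2π². -/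
/-!
Write `Δ = √Q` with `Q(σ, τ) = 9/2 + ½cos 2π(σ+τ) − 2cos 2πσ − 2cos 2πτ` the squared distance
between the two boundary points. Differentiating the functional equation, the terms carrying
`χ′` cancel by the stationarity condition (the envelope theorem), so `φ′(τ) = ∂_τΔ(χ(τ), τ)`.
Differentiating once more at `τ = 0`, where `Q = 1` and `∂_τQ = 0`, gives
`φ″(0) = ½ (d/dτ) ∂_τQ(χ(τ), τ)|₀ = π²(3 − χ′(0)) = 2√2 π²`.
-/

open Real Filter Topology

theorem ContDiffAt.eventually_differentiableAt {𝕜 E F : Type*} [NontriviallyNormedField 𝕜]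
    [NormedAddCommGroup E] [NormedSpace 𝕜 E] [NormedAddCommGroup F] [NormedSpace 𝕜 F]
    {f : E → F} {x : E} {n : WithTop ℕ∞} (hf : ContDiffAt 𝕜 n f x) (hn : 1 ≤ n) :
    ∀ᶠ y in 𝓝 x, DifferentiableAt 𝕜 f y :=
  ((hf.of_le hn).eventually (by simp)).mono fun _ hy => hy.differentiableAt one_ne_zero

theorem hasDerivAt_of_envelope {F : ℝ → ℝ → ℝ} {χ φ : ℝ → ℝ} {τ χ' Fσ Fτ c : ℝ}
    (hχ : HasDerivAt χ χ' τ) (hF : HasDerivAt (fun t => F (χ t) t) (Fσ * χ' + Fτ) τ)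
    (hφ : HasDerivAt φ (-Fσ) (χ τ))
    (heq : ∀ᶠ t in 𝓝 τ, φ t = F (χ t) t + φ (χ t) - c) :
    HasDerivAt φ Fτ τ := by
  have hrhs := (hF.add (hφ.comp τ hχ)).sub_const c
  rw [show Fσ * χ' + Fτ + -Fσ * χ' = Fτ by ring] at hrhs
  exact hrhs.congr_of_eventuallyEq heq

namespace TwoDisk

noncomputable def sqDist (σ τ : ℝ) : ℝ :=
  9/2 + 1/2 * cos (2*π*(σ+τ)) - 2 * cos (2*π*σ) - 2 * cos (2*π*τ)

/-- `∂_σ sqDist σ τ`; by symmetry `∂_τ sqDist σ τ = partialSqDist τ σ`. -/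
noncomputable def partialSqDist (σ τ : ℝ) : ℝ :=
  -π * sin (2*π*(σ+τ)) + 4*π * sin (2*π*σ)

theorem sq_add_sq_eq_sqDist (σ τ : ℝ) :
    ((1/2) * sin (2*π*σ) - (1/2) * sin (2*π*τ))^2 +
      ((1/2) * cos (2*π*σ) - (2 - (1/2) * cos (2*π*τ)))^2 = sqDist σ τ := by
  rw [sqDist, show 2*π*(σ+τ) = 2*π*σ + 2*π*τ by ring, cos_add]
  linear_combination (1/4) * sin_sq_add_cos_sq (2*π*σ) + (1/4) * sin_sq_add_cos_sq (2*π*τ)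

theorem one_le_sqDist (σ τ : ℝ) : 1 ≤ sqDist σ τ := by
  -- the second coordinates of the two points already differ by at least 1
  rw [← sq_add_sq_eq_sqDist]
  nlinarith [cos_le_one (2*π*σ), cos_le_one (2*π*τ),
    sq_nonneg ((1/2) * sin (2*π*σ) - (1/2) * sin (2*π*τ)),
    sq_nonneg ((1/2) * cos (2*π*σ) - (2 - (1/2) * cos (2*π*τ)) + 1)]

theorem sqDist_pos (σ τ : ℝ) : 0 < sqDist σ τ :=
  one_pos.trans_le (one_le_sqDist σ τ)

theorem sqrt_sqDist_pos (σ τ : ℝ) : 0 < √(sqDist σ τ) :=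
  sqrt_pos.2 (sqDist_pos σ τ)

theorem sqDist_zero_zero : sqDist 0 0 = 1 := by
  norm_num [sqDist]

variable {c d : ℝ → ℝ} {c' d' t : ℝ}

theorem hasDerivAt_sqDist (hc : HasDerivAt c c' t) (hd : HasDerivAt d d' t) :
    HasDerivAt (fun s => sqDist (c s) (d s))
      (partialSqDist (c t) (d t) * c' + partialSqDist (d t) (c t) * d') t := by
  have hcd := ((hc.add hd).const_mul (2*π)).cos.const_mul (1/2 : ℝ)
  have hc2 := (hc.const_mul (2*π)).cos.const_mul (2 : ℝ)
  have hd2 := (hd.const_mul (2*π)).cos.const_mul (2 : ℝ)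
  refine (((hcd.const_add (9/2 : ℝ)).sub hc2).sub hd2).congr_deriv ?_
  simp only [partialSqDist, Pi.add_apply, add_comm (d t)]
  ring

theorem hasDerivAt_sqrt_sqDist (hc : HasDerivAt c c' t) (hd : HasDerivAt d d' t) :
    HasDerivAt (fun s => √(sqDist (c s) (d s)))
      (partialSqDist (c t) (d t) / (2 * √(sqDist (c t) (d t))) * c' +
        partialSqDist (d t) (c t) / (2 * √(sqDist (c t) (d t))) * d') t := by
  refine ((hasDerivAt_sqDist hc hd).sqrt (sqDist_pos _ _).ne').congr_deriv ?_
  ring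

theorem hasDerivAt_partialSqDist_div_sqrt (hc : HasDerivAt c c' 0) (hc0 : c 0 = 0) :
    HasDerivAt (fun t => partialSqDist t (c t) / (2 * √(sqDist (c t) t)))
      (π^2 * (3 - c')) 0 := by
  have hnum := ((((hasDerivAt_id' (0:ℝ)).add hc).const_mul (2*π)).sin.const_mul (-π)).add
    (((hasDerivAt_id' (0:ℝ)).const_mul (2*π)).sin.const_mul (4*π))
  have hden := (hasDerivAt_sqrt_sqDist hc (hasDerivAt_id' (0:ℝ))).const_mul 2
  have hquot := hnum.div hden (mul_ne_zero two_ne_zero (sqrt_sqDist_pos _ _).ne')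
  refine hquot.congr_deriv ?_
  simp only [Pi.add_apply, hc0, sqDist_zero_zero, partialSqDist]
  norm_num
  ring

end TwoDisk

open TwoDisk in
theorem stmt_13_general (Δ : ℝ → ℝ → ℝ)
    (hΔ : ∀ σ τ : ℝ, Δ σ τ =
      Real.sqrt (((1/2) * Real.sin (2*π*σ) - (1/2) * Real.sin (2*π*τ))^2 +
        ((1/2) * Real.cos (2*π*σ) - (2 - (1/2) * Real.cos (2*π*τ)))^2))
    (χ φ : ℝ → ℝ)
    (hχ : ContDiffAt ℝ 4 χ 0) (hχ0 : χ 0 = 0)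
    (hχ' : deriv χ 0 = 3 - 2 * Real.sqrt 2)
    (heq : ∀ᶠ τ in nhds (0:ℝ), φ τ = Δ (χ τ) τ + φ (χ τ) - 1)
    (hstat : ∀ᶠ τ in nhds (0:ℝ), deriv φ (χ τ) = -deriv (fun σ => Δ σ τ) (χ τ))
    (hφ : ContDiffAt ℝ 4 φ 0) :
    iteratedDeriv 2 φ 0 = 2 * Real.sqrt 2 * π^2 := by
  obtain rfl : Δ = fun σ τ => √(sqDist σ τ) := by
    ext σ τ; rw [hΔ, sq_add_sq_eq_sqDist]
  have hχd := hχ.eventually_differentiableAt (by norm_num)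
  have hφd : ∀ᶠ τ in 𝓝 0, DifferentiableAt ℝ φ (χ τ) := by
    have hχχ := hχ.continuousAt.tendsto
    rw [hχ0] at hχχ
    exact hχχ.eventually (hφ.eventually_differentiableAt (by norm_num))
  have hφ'_eq : deriv φ =ᶠ[𝓝 0] fun τ => partialSqDist τ (χ τ) / (2 * √(sqDist (χ τ) τ)) := by
    filter_upwards [hχd, hφd, heq.eventually_nhds, hstat] with τ hχτ hφτ heqτ hstatτ
    have hcurve := hasDerivAt_sqrt_sqDist hχτ.hasDerivAt (hasDerivAt_id' τ)
    have hpartial := hasDerivAt_sqrt_sqDist (hasDerivAt_id' (χ τ)) (hasDerivAt_const (χ τ) τ)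
    rw [mul_one] at hcurve
    rw [mul_one, mul_zero, add_zero] at hpartial
    refine (hasDerivAt_of_envelope (F := fun σ τ => √(sqDist σ τ)) hχτ.hasDerivAt hcurve ?_
      heqτ).deriv
    rw [← hpartial.deriv, ← hstatτ]
    exact hφτ.hasDerivAt
  rw [iteratedDeriv_succ, iteratedDeriv_one, hφ'_eq.deriv_eq,
    (hasDerivAt_partialSqDist_div_sqrt (hχ.differentiableAt (by norm_num)).hasDerivAt hχ0).deriv,
    hχ']
  ring

theorem stmt_13 (Δ : ℝ → ℝ → ℝ)
    (hΔ : ∀ σ τ : ℝ, Δ σ τ =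
      Real.sqrt (((1/2) * Real.sin (2*π*σ) - (1/2) * Real.sin (2*π*τ))^2 +
        ((1/2) * Real.cos (2*π*σ) - (2 - (1/2) * Real.cos (2*π*τ)))^2))
    (χ φ : ℝ → ℝ)
    (hχ : ContDiffAt ℝ 4 χ 0) (hχ0 : χ 0 = 0)
    (hχ' : deriv χ 0 = 3 - 2 * Real.sqrt 2)
    (heq : ∀ᶠ τ in nhds (0:ℝ), φ τ = Δ (χ τ) τ + φ (χ τ) - 1)
    (hstat : ∀ᶠ τ in nhds (0:ℝ), deriv φ (χ τ) = -deriv (fun σ => Δ σ τ) (χ τ))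
    (hφ : ContDiffAt ℝ 4 φ 0) (hφ0 : φ 0 = 1) (hφ' : deriv φ 0 = 0) :
    iteratedDeriv 2 φ 0 = 2 * Real.sqrt 2 * π^2 :=
  stmt_13_general Δ hΔ χ φ hχ hχ0 hχ' heq hstat hφ
end
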